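/- arXiv:2404.11521 — 6 statements merged into one kernel-verified Lean document; each statement's English description precedes it below -/
import Mathlib

section
/- Let K, c, t > 0. Then ∫_{-ct}^{ct} I₀(K·√(c²t² - η²)) dη = (1/K)(e^{Kct} - e^{-Kct}), where I₀ is the modified Bessel function of the first kind of order zero. -/
open MeasureTheory intervalIntegral Real

lemma contPow (a : ℝ) (m : ℕ) : Continuous fun x : ℝ => (a^2 - x^2)^m := by fun_prop

lemma J_eq (a : ℝ) (k : ℕ) :
    ∫ x in (-a)..a, (a^2 - x^2)^k
      = 2*a*(a^2)^k*4^k*((Nat.factorial k : ℝ))^2/((Nat.factorial (2*k+1) : ℝ)) := by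
  induction k with
  | zero => simp; ring
  | succ k ih =>
    have hcont := contPow a
    have hint : ∀ m : ℕ, IntervalIntegrable (fun x : ℝ => (a^2-x^2)^m) volume (-a) a :=
      fun m => (hcont m).intervalIntegrable _ _
    have hu : ∀ x ∈ Set.uIcc (-a) a,
        HasDerivAt (fun x : ℝ => (a^2-x^2)^(k+1))
          ((((k:ℝ)+1)*(a^2-x^2)^k)*(-(2*x))) x := by
      intro x _
      have h := (((hasDerivAt_const x (a^2)).fun_sub (hasDerivAt_pow 2 x)).fun_pow (k+1))
      refine h.congr_deriv ?_
      push_cast [Nat.add_sub_cancel]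
      ring
    have hv : ∀ x ∈ Set.uIcc (-a) a, HasDerivAt (fun x : ℝ => x) (1:ℝ) x :=
      fun x _ => hasDerivAt_id x
    have hu' : IntervalIntegrable (fun x : ℝ => (((k:ℝ)+1)*(a^2-x^2)^k)*(-(2*x)))
        volume (-a) a := by
      apply Continuous.intervalIntegrable
      fun_prop
    have hv' : IntervalIntegrable (fun _ : ℝ => (1:ℝ)) volume (-a) a :=
      intervalIntegrable_const
    have ibp := intervalIntegral.integral_mul_deriv_eq_deriv_mul hu hv hu' hv'
    simp only [mul_one, neg_sq, sub_self, zero_pow (Nat.succ_ne_zero k), zero_mul,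
      zero_sub, mul_zero] at ibp
    have hre : (∫ x in (-a)..a, ((((k:ℝ)+1)*(a^2-x^2)^k)*(-(2*x))) * x)
        = -(2*((k:ℝ)+1)) * ((∫ x in (-a)..a, a^2*(a^2-x^2)^k)
            - ∫ x in (-a)..a, (a^2-x^2)^(k+1)) := by
      rw [← intervalIntegral.integral_sub ((hint k).const_mul _) (hint (k+1)),
        ← intervalIntegral.integral_const_mul]
      apply intervalIntegral.integral_congr
      intro x _
      ring
    rw [hre, intervalIntegral.integral_const_mul] at ibp
    have key : (∫ x in (-a)..a, (a^2-x^2)^(k+1))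
        = 2*((k:ℝ)+1)*a^2/(2*(k:ℝ)+3) * (∫ x in (-a)..a, (a^2-x^2)^k) := by
      have h3 : (2*(k:ℝ)+3) ≠ 0 := by positivity
      field_simp
      linear_combination ibp
    rw [key, ih]
    have hf1 : (Nat.factorial (2*(k+1)+1) : ℝ)
        = (2*(k:ℝ)+3)*((2*(k:ℝ)+2)*(Nat.factorial (2*k+1) : ℝ)) := by
      have : 2*(k+1)+1 = (2*k+1) + 1 + 1 := by ring
      rw [this, Nat.factorial_succ, Nat.factorial_succ]
      push_cast
      ring
    have hf2 : (Nat.factorial (k+1) : ℝ) = ((k:ℝ)+1)*(Nat.factorial k : ℝ) := by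
      rw [Nat.factorial_succ]; push_cast; ring
    rw [hf1, hf2]
    have h3 : (2*(k:ℝ)+3) ≠ 0 := by positivity
    have h2 : (2*(k:ℝ)+2) ≠ 0 := by positivity
    have hfk : (Nat.factorial (2*k+1) : ℝ) ≠ 0 :=
      Nat.cast_ne_zero.mpr (Nat.factorial_ne_zero _)
    field_simp
    ring

/-- The modified Bessel function of the first kind of order zero. -/
noncomputable def besselI0 (z : ℝ) : ℝ :=
  ∑' k : ℕ, (z / 2) ^ (2 * k) / ((Nat.factorial k : ℝ)) ^ 2

theorem integral_besselI0
    (K c t : ℝ) (hK : 0 < K) (hc : 0 < c) (ht : 0 < t) :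
    ∫ η in (-(c * t))..(c * t), besselI0 (K * Real.sqrt (c ^ 2 * t ^ 2 - η ^ 2))
      = (1 / K) * (Real.exp (K * c * t) - Real.exp (-(K * c * t))) := by
  have ha0 : 0 < c * t := mul_pos hc ht
  have hle : -(c * t) ≤ c * t := by linarith
  set F : ℕ → ℝ → ℝ := fun k η => ((K^2/4)^k/((Nat.factorial k : ℝ))^2) * ((c*t)^2 - η^2)^k
    with hF
  have hs : ∀ η ∈ Set.Ioc (-(c*t)) (c*t), 0 ≤ (c*t)^2 - η^2 := by
    intro η hη
    have := sq_le_sq' (le_of_lt hη.1) hη.2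
    linarith
  have hpt : ∀ η ∈ Set.Ioc (-(c*t)) (c*t),
      besselI0 (K * Real.sqrt (c ^ 2 * t ^ 2 - η ^ 2)) = ∑' k, F k η := by
    intro η hη
    unfold besselI0
    apply tsum_congr
    intro k
    have hsq : (K * Real.sqrt (c ^ 2 * t ^ 2 - η ^ 2) / 2)^2 = K^2/4 * ((c*t)^2 - η^2) := by
      have h1 : c ^ 2 * t ^ 2 - η ^ 2 = (c*t)^2 - η^2 := by ring
      rw [div_pow, mul_pow, h1, Real.sq_sqrt (hs η hη)]
      ring
    rw [pow_mul, hsq, mul_pow, hF]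
    ring
  have hint : ∀ k, Integrable (F k) (volume.restrict (Set.Ioc (-(c*t)) (c*t))) := by
    intro k
    exact (Continuous.integrableOn_Ioc (by fun_prop))
  have hval : ∀ k, ∫ η in Set.Ioc (-(c*t)) (c*t), F k η
      = (2/K) * ((K*(c*t))^(2*k+1)/((Nat.factorial (2*k+1) : ℝ))) := by
    intro k
    rw [← intervalIntegral.integral_of_le hle, hF]
    simp only []
    rw [intervalIntegral.integral_const_mul, J_eq (c*t) k]
    have hfk : ((Nat.factorial k : ℝ)) ≠ 0 := Nat.cast_ne_zero.mpr (Nat.factorial_ne_zero _)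
    have hfk2 : ((Nat.factorial (2*k+1) : ℝ)) ≠ 0 := Nat.cast_ne_zero.mpr (Nat.factorial_ne_zero _)
    rw [pow_add, pow_mul, mul_pow]
    field_simp
    have h4 : ((1:ℝ)/4)^k * 4^k = 1 := by rw [← mul_pow]; norm_num
    linear_combination (K ^ (k * 2) * c ^ (k * 2) * t ^ (k * 2)) * h4
  have hnormval : ∀ k, ∫ η in Set.Ioc (-(c*t)) (c*t), ‖F k η‖
      = (2/K) * ((K*(c*t))^(2*k+1)/((Nat.factorial (2*k+1) : ℝ))) := by
    intro k
    rw [← hval k]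
    apply MeasureTheory.setIntegral_congr_fun measurableSet_Ioc
    intro η hη
    have h0 : 0 ≤ F k η := by
      have := hs η hη
      rw [hF]
      positivity
    exact Real.norm_of_nonneg h0
  have hsum : Summable fun k => ∫ η in Set.Ioc (-(c*t)) (c*t), ‖F k η‖ := by
    simp only [hnormval]
    exact ((Real.hasSum_sinh (K*(c*t))).summable).mul_left (2/K)
  rw [intervalIntegral.integral_of_le hle,
    MeasureTheory.setIntegral_congr_fun measurableSet_Ioc hpt,
    ← MeasureTheory.integral_tsum_of_summable_integral_norm hint hsum]
  simp only [hval]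
  rw [tsum_mul_left, ← Real.sinh_eq_tsum, Real.sinh_eq]
  have : K * (c * t) = K * c * t := by ring
  rw [this]
  field_simp
end

section
/- Let K, c, t > 0. Then ∫_{-ct}^{ct} (∂/∂t) I₀(K·√(c²t² - η²)) dη = c·(e^{Kct} + e^{-Kct} - 2), where the time derivative is taken pointwise in t before integrating in η. -/
open MeasureTheory intervalIntegral Set

lemma J_rec (a : ℝ) (k : ℕ) :
    (2*(k:ℝ)+3) * ∫ η in (-a)..a, (a^2 - η^2)^(k+1)
      = 2*((k:ℝ)+1)*a^2 * ∫ η in (-a)..a, (a^2 - η^2)^k := by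
  have hψ : ∀ η : ℝ, HasDerivAt (fun η : ℝ => η * (a^2-η^2)^(k+1))
      ((2*(k:ℝ)+3)*(a^2-η^2)^(k+1) - 2*((k:ℝ)+1)*a^2*(a^2-η^2)^k) η := by
    intro η
    have h1 : HasDerivAt (fun η : ℝ => (a^2-η^2)^(k+1))
        (((k:ℝ)+1) * (a^2-η^2)^k * (-(2*η))) η := by
      have hin : HasDerivAt (fun η : ℝ => a^2-η^2) (-(2*η)) η := by
        simpa using ((hasDerivAt_pow 2 η).const_sub (a^2))
      have := (hasDerivAt_pow (k+1) ((fun η : ℝ => a^2-η^2) η)).comp η hin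
      simpa [Function.comp_def, pow_succ, mul_comm, mul_assoc, mul_left_comm] using this
    have := (hasDerivAt_id η).mul h1
    refine this.congr_deriv ?_
    simp only [id_eq]
    ring
  have hcont : ∀ m : ℕ, IntervalIntegrable (fun η : ℝ => (a^2-η^2)^m) volume (-a) a :=
    fun m => ((continuous_const.sub ((continuous_id.pow 2))).pow m).intervalIntegrable _ _
  have hFTC := intervalIntegral.integral_eq_sub_of_hasDerivAt (f := fun η : ℝ => η * (a^2-η^2)^(k+1))
    (fun η _ => hψ η) ((((hcont (k+1)).const_mul _).sub ((hcont k).const_mul _)))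
  have h0 : (-a) * (a^2 - (-a)^2)^(k+1) = 0 := by simp
  rw [intervalIntegral.integral_sub ((hcont (k+1)).const_mul _) ((hcont k).const_mul _),
    intervalIntegral.integral_const_mul, intervalIntegral.integral_const_mul] at hFTC
  have : a * (a^2 - a^2)^(k+1) - (-a) * (a^2 - (-a)^2)^(k+1) = 0 := by simp
  rw [this] at hFTC
  linarith

lemma J_val (a : ℝ) : ∀ k : ℕ, (∫ η in (-a)..a, (a^2-η^2)^k)
    = 2*a^(2*k+1)*4^k*((Nat.factorial k : ℝ))^2/((Nat.factorial (2*k+1) : ℝ)) := by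
  intro k; induction k with
  | zero => simp; ring
  | succ k ih =>
    have h := J_rec a k
    rw [ih] at h
    have h3 : (2*(k:ℝ)+3) ≠ 0 := by positivity
    have hf : ((Nat.factorial (2*k+1) : ℝ)) ≠ 0 := by positivity
    have e1 : (Nat.factorial (2*(k+1)+1) : ℝ)
        = (2*(k:ℝ)+3)*(2*(k:ℝ)+2)*(Nat.factorial (2*k+1)) := by
      have h2 : 2*(k+1)+1 = (2*k+1)+1+1 := by ring
      rw [h2, Nat.factorial_succ, Nat.factorial_succ]; push_cast; ring
    have hkf : ((Nat.factorial (k+1) : ℝ)) = ((k:ℝ)+1) * (Nat.factorial k) := by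
      rw [Nat.factorial_succ]; push_cast; ring
    rw [eq_comm, div_eq_iff (by positivity), e1, hkf]
    field_simp at h
    have e2 : a^(2*(k+1)+1) = a^(2*k+1)*a^2 := by ring
    rw [e2]
    linear_combination (-(2*(k:ℝ)+2)) * h

noncomputable def besselF (q x : ℝ) : ℝ := ∑' k : ℕ, q^k * x^k / ((Nat.factorial k : ℝ))^2

noncomputable def besselD (q x : ℝ) : ℝ :=
  ∑' k : ℕ, (k:ℝ) * (q^k * x^(k-1)) / ((Nat.factorial k : ℝ))^2

lemma hasDerivAt_besselF (q x : ℝ) : HasDerivAt (besselF q) (besselD q x) x := by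
  set R : ℝ := |x| + 1 with hR
  have hR0 : 0 < R := by positivity
  have hu : Summable (fun k : ℕ => (k:ℝ) * (|q|^k * R^(k-1)) / ((Nat.factorial k : ℝ))^2) := by
    rw [← summable_nat_add_iff 1]
    apply Summable.of_nonneg_of_le (fun k => by positivity)
      (f := fun k : ℕ => |q| * ((|q| * R)^k / (Nat.factorial k : ℝ)))
      (fun k => ?_) ((Real.summable_pow_div_factorial (|q| * R)).mul_left |q|)
    have hk1 : (1:ℝ) ≤ (Nat.factorial k : ℝ) := by
      exact_mod_cast Nat.one_le_iff_ne_zero.mpr (Nat.factorial_ne_zero k)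
    have hfs : ((Nat.factorial (k+1) : ℝ)) = ((k:ℝ)+1) * (Nat.factorial k : ℝ) := by
      rw [Nat.factorial_succ]; push_cast; ring
    calc (((k+1:ℕ)):ℝ) * (|q| ^ (k + 1) * R ^ (k+1-1)) / ((Nat.factorial (k+1) : ℝ)) ^ 2
        = (|q|^(k+1)*R^k)/(((k:ℝ)+1)*((Nat.factorial k:ℝ))^2) := by
          rw [hfs]; push_cast [Nat.add_sub_cancel]; field_simp
      _ ≤ (|q|^(k+1)*R^k)/((Nat.factorial k:ℝ)) := by
          apply div_le_div_of_nonneg_left (by positivity) (by positivity)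
          nlinarith [Nat.cast_nonneg (α := ℝ) k]
      _ = |q| * ((|q| * R)^k/(Nat.factorial k:ℝ)) := by rw [mul_pow, pow_succ]; ring
  have := hasDerivAt_tsum_of_isPreconnected hu (Metric.isOpen_ball (x := (0:ℝ)) (ε := R))
    ((convex_ball (0:ℝ) R).isPreconnected)
    (g := fun k y => q^k * y^k / ((Nat.factorial k : ℝ))^2)
    (g' := fun k y => (k:ℝ) * (q^k * y^(k-1)) / ((Nat.factorial k : ℝ))^2)
    (fun k y _ => ?_) (fun k y hy => ?_) (y₀ := 0) ?_ ?_ (y := x) ?_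
  · exact this
  · -- HasDerivAt
    have h := ((hasDerivAt_pow k y).const_mul (q^k)).div_const (((Nat.factorial k : ℝ))^2)
    refine h.congr_deriv ?_
    ring
  · -- bound
    rw [Real.norm_eq_abs]
    have hy' : |y| ≤ R := by
      rw [Metric.mem_ball, Real.dist_eq, sub_zero] at hy
      exact le_of_lt hy
    have : |(k:ℝ) * (q^k * y^(k-1)) / ((Nat.factorial k : ℝ))^2|
        = (k:ℝ) * (|q|^k * |y|^(k-1)) / ((Nat.factorial k : ℝ))^2 := by
      rw [abs_div, abs_mul, abs_mul, abs_pow, abs_pow, Nat.abs_cast, abs_pow, Nat.abs_cast]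
    rw [this]
    gcongr
  · simpa [Metric.mem_ball] using hR0
  · -- summable at 0
    apply summable_of_ne_finset_zero (s := {0})
    intro k hk
    simp only [Finset.mem_singleton] at hk
    simp [zero_pow hk]
  · rw [Metric.mem_ball, Real.dist_eq, sub_zero]
    linarith [abs_nonneg x]

lemma besselI0_eq_besselF (K y : ℝ) (hy : 0 ≤ y) :
    besselI0 (K * Real.sqrt y) = besselF (K^2/4) y := by
  unfold besselI0 besselF
  refine tsum_congr fun k => ?_
  rw [pow_mul, ← mul_pow]
  congr 2
  rw [div_pow, mul_pow, Real.sq_sqrt hy]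
  ring

theorem integral_deriv_besselI0
    (K c t : ℝ) (hK : 0 < K) (hc : 0 < c) (ht : 0 < t) :
    ∫ η in (-(c * t))..(c * t),
        deriv (fun τ => besselI0 (K * Real.sqrt (c ^ 2 * τ ^ 2 - η ^ 2))) t
      = c * (Real.exp (K * c * t) + Real.exp (-(K * c * t)) - 2) := by
  set q : ℝ := K^2/4 with hq
  have hq0 : 0 ≤ q := by positivity
  set a : ℝ := c*t with ha
  have ha0 : 0 < a := mul_pos hc ht
  -- pointwise derivative identity on the open interval
  have hEq : ∀ η ∈ Set.Ioo (-a) a,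
      deriv (fun τ => besselI0 (K * Real.sqrt (c ^ 2 * τ ^ 2 - η ^ 2))) t
        = (2*c^2*t) * besselD q (a^2 - η^2) := by
    intro η hη
    have hlt : η^2 < c^2*t^2 := by
      have h := sq_lt_sq' hη.1 hη.2
      have : a^2 = c^2*t^2 := by rw [ha]; ring
      linarith [h, this.symm.le]
    have hS : IsOpen {τ : ℝ | η^2 < c^2*τ^2} := by
      apply isOpen_lt continuous_const
      fun_prop
    have htS : t ∈ {τ : ℝ | η^2 < c^2*τ^2} := hlt
    have hev : (fun τ => besselI0 (K * Real.sqrt (c ^ 2 * τ ^ 2 - η ^ 2)))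
        =ᶠ[nhds t] (fun τ => besselF q (c^2*τ^2 - η^2)) := by
      filter_upwards [hS.mem_nhds htS] with τ hτ
      have hτ' : η^2 < c^2*τ^2 := hτ
      rw [besselI0_eq_besselF K _ (by linarith), hq]
    rw [hev.deriv_eq]
    have hinner : HasDerivAt (fun τ : ℝ => c^2*τ^2 - η^2) (c^2*(2*t)) t := by
      simpa using ((hasDerivAt_pow 2 t).const_mul (c^2)).sub_const (η^2)
    have hcomp := (hasDerivAt_besselF q (c^2*t^2-η^2)).comp t hinner
    have hD : HasDerivAt (fun τ => besselF q (c^2*τ^2 - η^2))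
        (besselD q (c^2*t^2-η^2) * (c^2*(2*t))) t := hcomp
    rw [hD.deriv, show c^2*t^2 = a^2 by rw [ha]; ring]
    ring
  have h1 : (∫ η in (-(c * t))..(c * t),
        deriv (fun τ => besselI0 (K * Real.sqrt (c ^ 2 * τ ^ 2 - η ^ 2))) t)
      = (2*c^2*t) * ∫ η in Set.Ioo (-a) a, besselD q (a^2-η^2) := by
    rw [intervalIntegral.integral_of_le (by linarith), integral_Ioc_eq_integral_Ioo,
      setIntegral_congr_fun measurableSet_Ioo hEq, MeasureTheory.integral_const_mul]
  rw [h1]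
  -- the series of integrands
  set G : ℕ → ℝ → ℝ :=
    fun k η => (k:ℝ) * (q^k * (a^2-η^2)^(k-1)) / ((Nat.factorial k : ℝ))^2 with hG
  have hGc : ∀ k, Continuous (G k) := by intro k; rw [hG]; fun_prop
  have hGint : ∀ k, MeasureTheory.IntegrableOn (G k) (Set.Ioo (-a) a) := fun k =>
    (((hGc k).integrableOn_Icc (a := -a) (b := a))).mono_set Set.Ioo_subset_Icc_self
  have hGval : ∀ k, (∫ η in Set.Ioo (-a) a, G k η)
      = ((k:ℝ) * q^k / ((Nat.factorial k : ℝ))^2) *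
        (2*a^(2*(k-1)+1)*4^(k-1)*((Nat.factorial (k-1) : ℝ))^2/((Nat.factorial (2*(k-1)+1) : ℝ))) := by
    intro k
    rw [← integral_Ioc_eq_integral_Ioo, ← intervalIntegral.integral_of_le (by linarith),
      ← J_val a (k-1), ← intervalIntegral.integral_const_mul]
    apply intervalIntegral.integral_congr
    intro η _
    rw [hG]; ring
  have hGsucc : ∀ k : ℕ, (∫ η in Set.Ioo (-a) a, G (k+1) η)
      = (K*a)^(2*(k+1)) / ((Nat.factorial (2*(k+1)) : ℝ)) / a := by
    intro k
    rw [hGval]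
    simp only [Nat.add_sub_cancel]
    have e1 : (Nat.factorial (2*(k+1)) : ℝ) = (2*(k:ℝ)+2) * (Nat.factorial (2*k+1)) := by
      rw [show 2*(k+1) = (2*k+1)+1 by ring, Nat.factorial_succ]; push_cast; ring
    have e2 : (Nat.factorial (k+1) : ℝ) = ((k:ℝ)+1) * (Nat.factorial k) := by
      rw [Nat.factorial_succ]; push_cast; ring
    have e3 : q^(k+1) * 4^(k+1) = K^(2*(k+1)) := by
      rw [hq, div_pow, ← pow_mul]
      field_simp
    have e4 : (K*a)^(2*(k+1)) = K^(2*(k+1)) * a^(2*k+1) * a := by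
      rw [mul_pow, show 2*(k+1) = (2*k+1)+1 by ring, pow_succ, pow_succ]
      ring
    have hf1 : ((Nat.factorial k : ℝ)) ≠ 0 := by positivity
    have hf2 : ((Nat.factorial (2*k+1) : ℝ)) ≠ 0 := by positivity
    rw [e1, e2, e4]
    rw [← e3]
    field_simp
    push_cast; ring
  have hG0 : (∫ η in Set.Ioo (-a) a, G 0 η) = 0 := by
    rw [hGval]; norm_num
  have hnorm : ∀ k, (∫ η in Set.Ioo (-a) a, ‖G k η‖) = ∫ η in Set.Ioo (-a) a, G k η := by
    intro k
    apply setIntegral_congr_fun measurableSet_Ioo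
    intro η hη
    have hy : (0:ℝ) ≤ a^2 - η^2 := by
      have := sq_lt_sq' hη.1 hη.2
      linarith
    have h0 : 0 ≤ G k η := by
      rw [hG]
      have : 0 ≤ (a^2-η^2)^(k-1) := pow_nonneg hy _
      positivity
    exact Real.norm_of_nonneg h0
  have hsum : Summable (fun k => ∫ η in Set.Ioo (-a) a, ‖G k η‖) := by
    simp only [hnorm]
    rw [← summable_nat_add_iff 1]
    simp only [hGsucc]
    apply Summable.of_nonneg_of_le (fun k => by positivity)
      (f := fun k : ℕ => ((K*a)^2)^(k+1) / ((Nat.factorial (k+1) : ℝ)) / a) (fun k => ?_)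
    · exact (((summable_nat_add_iff 1).mpr
        (Real.summable_pow_div_factorial ((K*a)^2))).div_const a)
    · rw [show ((K*a)^2)^(k+1) = (K*a)^(2*(k+1)) from by rw [← pow_mul]]
      gcongr
      omega
  have hswap := MeasureTheory.integral_tsum_of_summable_integral_norm
    (μ := volume.restrict (Set.Ioo (-a) a)) (F := G) hGint hsum
  have hbD : (fun η => besselD q (a^2-η^2)) = fun η => ∑' k, G k η := rfl
  rw [hbD, ← hswap]
  simp only [hnorm] at hsum
  rw [Summable.tsum_eq_zero_add hsum, hG0, zero_add]
  simp only [hGsucc]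
  rw [tsum_div_const]
  have hcsum : Summable (fun n => (K*a)^(2*n)/((Nat.factorial (2*n)):ℝ)) :=
    (Real.hasSum_cosh (K*a)).summable
  have h2 : (∑' k:ℕ, (K*a)^(2*(k+1))/((Nat.factorial (2*(k+1))):ℝ)) = Real.cosh (K*a) - 1 := by
    have h3 := Summable.tsum_eq_zero_add hcsum
    rw [← Real.cosh_eq_tsum] at h3
    norm_num at h3
    linarith
  rw [h2, Real.cosh_eq]
  rw [ha, show K*(c*t) = K*c*t by ring]
  field_simp
end

section
/- Let λ > c·|α| ≥ 0 with c, t > 0. Then ∫_{-ct}^{ct} e^{iαη} I₀((λ/c)·√(c²t² - η²)) dη = (c/√(λ² - α²c²))·(e^{t√(λ² - α²c²)} - e^{-t√(λ² - α²c²)}). -/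
set_option maxHeartbeats 1600000

open Nat Finset MeasureTheory intervalIntegral


open Complex

private theorem Kodd (a : ℝ) (j k : ℕ) (hj : Odd j) :
    ∫ η in (-a)..a, η ^ j * (a ^ 2 - η ^ 2) ^ k = 0 := by
  have h : ∀ x : ℝ, (-x) ^ j * (a ^ 2 - (-x) ^ 2) ^ k = -(x ^ j * (a ^ 2 - x ^ 2) ^ k) := by
    intro x
    rw [hj.neg_pow, neg_sq, neg_mul]
  have := intervalIntegral.integral_comp_neg (a := -a) (b := a)
    (fun η => η ^ j * (a ^ 2 - η ^ 2) ^ k)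
  simp only [h, neg_neg] at this
  rw [intervalIntegral.integral_neg] at this
  linarith

private theorem Keven (a : ℝ) (m k : ℕ) :
    ∫ η in (-a)..a, η ^ (2*m) * (a ^ 2 - η ^ 2) ^ k
      = 4 ^ (k+1) * (2*m)! * k ! * (m+k+1)! * a ^ (2*(m+k)+1)
        / ((m)! * (2*(m+k)+2)!) := by
  induction k generalizing m with
  | zero =>
    simp only [pow_zero, mul_one, integral_pow]
    rw [Odd.neg_pow ⟨m, by ring⟩]
    have e1 : ((2*(m+0)+2)! : ℝ) = (2*m+2)*(2*m+1)*(2*m)! := by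
      have h : 2*(m+0)+2 = ((2*m)+1)+1 := by ring
      rw [h, Nat.factorial_succ, Nat.factorial_succ]; push_cast; ring
    have e2 : ((m+0+1)! : ℝ) = (m+1) * m ! := by
      rw [Nat.factorial_succ]; push_cast; ring
    rw [e1, e2]
    have h1 : ((2*m:ℕ):ℝ) + 1 ≠ 0 := by positivity
    have h2 : ((2*m)! : ℝ) ≠ 0 := by positivity
    have h3 : (m ! : ℝ) ≠ 0 := by positivity
    have h4 : (2*(m:ℝ)+2) ≠ 0 := by positivity
    have h5 : (2*(m:ℝ)+1) ≠ 0 := by positivity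
    field_simp
    push_cast
    ring
  | succ k ih =>
    have hIBP :
        ∫ η in (-a)..a, (a ^ 2 - η ^ 2) ^ (k+1) * η ^ (2*m)
          = (2*(k:ℝ)+2)/(2*(m:ℝ)+1) * ∫ η in (-a)..a, η ^ (2*(m+1)) * (a ^ 2 - η ^ 2) ^ k := by
      have hu : ∀ x ∈ Set.Ioo (min (-a) a) (max (-a) a),
          HasDerivAt (fun η : ℝ => (a ^ 2 - η ^ 2) ^ (k+1))
            (-(2*(k:ℝ)+2) * x * (a ^ 2 - x ^ 2) ^ k) x := by
        intro x _
        have h0 : HasDerivAt (fun η : ℝ => a ^ 2 - η ^ 2) (-(2*x)) x := by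
          simpa using ((hasDerivAt_pow 2 x).const_sub (a ^ 2))
        have := h0.pow (k+1)
        refine this.congr_deriv ?_
        simp only [Nat.add_sub_cancel]
        push_cast
        ring
      have hv : ∀ x ∈ Set.Ioo (min (-a) a) (max (-a) a),
          HasDerivAt (fun η : ℝ => η ^ (2*m+1)/(2*(m:ℝ)+1)) (x ^ (2*m)) x := by
        intro x _
        have := (hasDerivAt_pow (2*m+1) x).div_const (2*(m:ℝ)+1)
        refine this.congr_deriv ?_
        have h : (2*(m:ℝ)+1) ≠ 0 := by positivity
        simp only [Nat.add_sub_cancel]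
        push_cast
        field_simp
      have key := intervalIntegral.integral_mul_deriv_eq_deriv_mul_of_hasDerivAt
        (u := fun η : ℝ => (a ^ 2 - η ^ 2) ^ (k+1))
        (v := fun η : ℝ => η ^ (2*m+1)/(2*(m:ℝ)+1))
        (u' := fun x : ℝ => -(2*(k:ℝ)+2) * x * (a ^ 2 - x ^ 2) ^ k)
        (v' := fun x : ℝ => x ^ (2*m))
        (a := -a) (b := a)
        (by apply Continuous.continuousOn; continuity)
        (by apply Continuous.continuousOn; continuity)
        hu hv
        (by apply Continuous.intervalIntegrable; continuity)
        (by apply Continuous.intervalIntegrable; continuity)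
      rw [key]
      have hz : (a^2 - a^2 : ℝ) = 0 := by ring
      have hz' : (a^2 - (-a)^2 : ℝ) = 0 := by ring
      simp only [hz, hz', zero_pow (Nat.succ_ne_zero k), zero_mul, sub_zero, zero_sub]
      rw [← intervalIntegral.integral_const_mul, ← intervalIntegral.integral_neg]
      congr 1
      ext x
      have : (2*(m:ℝ)+1) ≠ 0 := by positivity
      field_simp
      ring
    have hcomm : ∫ η in (-a)..a, η ^ (2*m) * (a ^ 2 - η ^ 2) ^ (k+1)
        = ∫ η in (-a)..a, (a ^ 2 - η ^ 2) ^ (k+1) * η ^ (2*m) := by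
      congr 1; ext x; ring
    rw [hcomm, hIBP, ih (m+1)]
    have e1 : ((2*(m+1)) ! : ℝ) = (2*m+2)*(2*m+1)*(2*m)! := by
      have h : 2*(m+1) = ((2*m)+1)+1 := by ring
      rw [h, Nat.factorial_succ, Nat.factorial_succ]; push_cast; ring
    have e2 : ((m+1)! : ℝ) = (m+1) * m ! := by
      rw [Nat.factorial_succ]; push_cast; ring
    have e3 : ((k+1)! : ℝ) = (k+1) * k ! := by
      rw [Nat.factorial_succ]; push_cast; ring
    have e4 : (m+1)+k+1 = m+(k+1)+1 := by ring
    have e5 : 2*((m+1)+k)+1 = 2*(m+(k+1))+1 := by ring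
    have e6 : 2*((m+1)+k)+2 = 2*(m+(k+1))+2 := by ring
    rw [e1, e2, e3, e4, e5, e6]
    have h1 : ((2*(m+(k+1))+2)! : ℝ) ≠ 0 := by positivity
    have h2 : ((2*m)! : ℝ) ≠ 0 := by positivity
    have h3 : (m ! : ℝ) ≠ 0 := by positivity
    have h5 : (2*(m:ℝ)+1) ≠ 0 := by positivity
    have h6 : ((m+(k+1)+1)! : ℝ) ≠ 0 := by positivity
    have h7 : (k ! : ℝ) ≠ 0 := by positivity
    field_simp
    ring

private lemma aux_sum2 (x : ℝ) : Summable fun k : ℕ => |x| ^ k / ((k)! : ℝ)^2 := by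
  refine Summable.of_nonneg_of_le (fun k => by positivity) (fun k => ?_)
    (Real.summable_pow_div_factorial |x|)
  have h1 : (1:ℝ) ≤ ((k)! : ℝ) := by exact_mod_cast (Nat.factorial_pos k)
  gcongr
  exact le_self_pow₀ h1 two_ne_zero

private lemma besselI0_sqrt (b s : ℝ) (hs : 0 ≤ s) :
    besselI0 (b * Real.sqrt s) = ∑' k : ℕ, (b^2 * s / 4)^k / ((k)! : ℝ)^2 := by
  unfold besselI0
  refine tsum_congr fun k => ?_
  congr 1
  rw [pow_mul]
  congr 1
  rw [div_pow, mul_pow, Real.sq_sqrt hs]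
  norm_num

private theorem series_eval (a b α : ℝ) (ha : 0 < a) (hαb : |α| < b) :
    ∑' p : ℕ × ℕ,
        ((-(α^2))^p.1 / (p.1)!) * ((b^2)^p.2 / (p.2)!) *
          (4 * ((p.1+p.2+1)!) * a^(2*(p.1+p.2)+1) / ((2*(p.1+p.2)+2)!))
      = (Real.exp (a * Real.sqrt (b^2-α^2)) - Real.exp (-(a * Real.sqrt (b^2-α^2))))
          / Real.sqrt (b^2-α^2) := by
  set C : ℕ × ℕ → ℝ := fun p =>
    ((-(α^2))^p.1 / (p.1)!) * ((b^2)^p.2 / (p.2)!) *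
      (4 * ((p.1+p.2+1)!) * a^(2*(p.1+p.2)+1) / ((2*(p.1+p.2)+2)!)) with hCdef
  have hbpos : 0 < b := lt_of_le_of_lt (abs_nonneg α) hαb
  have hd : 0 < b^2 - α^2 := by
    have h2 : α^2 < b^2 := by
      rw [← _root_.sq_abs α]
      exact pow_lt_pow_left₀ hαb (abs_nonneg α) two_ne_zero
    linarith
  set μ := Real.sqrt (b^2 - α^2) with hμdef
  have hμpos : 0 < μ := Real.sqrt_pos.mpr hd
  have hμsq : μ^2 = b^2 - α^2 := Real.sq_sqrt hd.le
  have habs : ∀ p : ℕ × ℕ, |C p| =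
      (α^2)^p.1 / (p.1)! * ((b^2)^p.2 / (p.2)!) *
        (4 * ((p.1+p.2+1)!) * a^(2*(p.1+p.2)+1) / ((2*(p.1+p.2)+2)!)) := by
    intro p
    have h : C p = ((-1 : ℝ)^p.1) * ((α^2)^p.1 / (p.1)! * ((b^2)^p.2 / (p.2)!) *
        (4 * ((p.1+p.2+1)!) * a^(2*(p.1+p.2)+1) / ((2*(p.1+p.2)+2)!))) := by
      rw [hCdef]; ring
    rw [h, _root_.abs_mul, _root_.abs_pow, _root_.abs_neg, _root_.abs_one, one_pow, one_mul,
      _root_.abs_of_nonneg (by positivity)]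
  have hbound : ∀ p : ℕ × ℕ, |C p| ≤
      (4*a*(α^2*a^2)^p.1 / (p.1)!) * ((b^2*a^2)^p.2 / (p.2)!) := by
    intro p
    rw [habs p]
    have hre : (4*a*(α^2*a^2)^p.1 / ((p.1)! : ℝ)) * ((b^2*a^2)^p.2 / (p.2)!)
        = (α^2)^p.1 / (p.1)! * ((b^2)^p.2 / (p.2)!) * (4*a^(2*(p.1+p.2)+1)) := by
      ring
    rw [hre]
    have hZ : 4 * ((p.1+p.2+1)! : ℝ) * a^(2*(p.1+p.2)+1) / ((2*(p.1+p.2)+2)!)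
        ≤ 4 * a^(2*(p.1+p.2)+1) := by
      rw [div_le_iff₀ (by positivity)]
      have h1 : ((p.1+p.2+1)! : ℝ) ≤ ((2*(p.1+p.2)+2)! : ℝ) := by
        exact_mod_cast Nat.factorial_le (by omega)
      nlinarith [mul_le_mul_of_nonneg_right h1 (pow_nonneg ha.le (2*(p.1+p.2)+1)),
        pow_nonneg ha.le (2*(p.1+p.2)+1)]
    exact mul_le_mul_of_nonneg_left hZ (by positivity)
  have hBsum : Summable (fun p : ℕ × ℕ =>
      (4*a*(α^2*a^2)^p.1 / (p.1)!) * ((b^2*a^2)^p.2 / (p.2)!)) := by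
    exact Summable.mul_of_nonneg
      (f := fun m : ℕ => 4*a*(α^2*a^2)^m / (m)!)
      (g := fun k : ℕ => (b^2*a^2)^k / (k)!)
      (by simpa [mul_div_assoc] using (Real.summable_pow_div_factorial (α^2*a^2)).mul_left (4*a))
      (Real.summable_pow_div_factorial (b^2*a^2))
      (fun m => by positivity) (fun k => by positivity)
  have hCsum : Summable C :=
    Summable.of_abs (Summable.of_nonneg_of_le (fun p => abs_nonneg _) hbound hBsum)
  -- reindex over antidiagonal
  have hsigma : Summable (fun x : Σ n : ℕ, antidiagonal n => C (x.2 : ℕ × ℕ)) :=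
    (Finset.HasAntidiagonal.sigmaAntidiagonalEquivProd.summable_iff).mpr hCsum
  have hstep1 : ∑' p : ℕ × ℕ, C p = ∑' n : ℕ, ∑ kl ∈ antidiagonal n, C kl := by
    rw [← Finset.HasAntidiagonal.sigmaAntidiagonalEquivProd.tsum_eq C]
    have he : (fun c : Σ n : ℕ, antidiagonal n => C (Finset.HasAntidiagonal.sigmaAntidiagonalEquivProd c))
        = fun c => C (c.2 : ℕ × ℕ) := rfl
    rw [he, Summable.tsum_sigma' (fun n => (hasSum_fintype _).summable) hsigma]
    exact tsum_congr fun n => by rw [Finset.tsum_subtype (antidiagonal n) C]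
  -- evaluate antidiagonal sums
  have hdiag : ∀ n : ℕ, ∑ kl ∈ antidiagonal n, C kl
      = (2/μ) * ((a*μ)^(2*n+1) / ((2*n+1)!)) := by
    intro n
    rw [Finset.Nat.sum_antidiagonal_eq_sum_range_succ_mk]
    have hterm : ∀ m ∈ range (n+1), C (m, n - m)
        = ((n.choose m : ℝ) * (-(α^2))^m * (b^2)^(n-m))
            * (4 * ((n+1)!) * a^(2*n+1) / (((2*n+2)!) * (n !))) := by
      intro m hm
      have hmn : m ≤ n := Nat.lt_succ_iff.mp (Finset.mem_range.mp hm)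
      have hadd : m + (n - m) = n := by omega
      rw [hCdef]
      simp only [hadd]
      rw [Nat.cast_choose ℝ hmn]
      have h1 : ((m)! : ℝ) ≠ 0 := by positivity
      have h2 : (((n-m))! : ℝ) ≠ 0 := by positivity
      have h3 : ((n)! : ℝ) ≠ 0 := by positivity
      have h4 : (((2*n+2))! : ℝ) ≠ 0 := by positivity
      field_simp
    rw [Finset.sum_congr rfl hterm, ← Finset.sum_mul]
    have hb2 : ∑ m ∈ range (n+1), (n.choose m : ℝ) * (-(α^2))^m * (b^2)^(n-m)
        = (μ^2)^n := by
      rw [hμsq]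
      have := add_pow (-(α^2)) (b^2) n
      rw [show b^2 - α^2 = -(α^2) + b^2 by ring, this]
      apply Finset.sum_congr rfl
      intro m hm
      ring
    rw [hb2]
    have h5 : ((2*n+2)! : ℝ) = (2*n+2) * (2*n+1)! := by
      rw [show 2*n+2 = (2*n+1)+1 by ring, Nat.factorial_succ]; push_cast; ring
    have h6 : ((n+1)! : ℝ) = (n+1) * n ! := by
      rw [Nat.factorial_succ]; push_cast; ring
    rw [h5, h6]
    have h7 : ((2*n+1)! : ℝ) ≠ 0 := by positivity
    have h8 : ((n)! : ℝ) ≠ 0 := by positivity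
    have h9 : μ ≠ 0 := hμpos.ne'
    have hμpow : (a*μ)^(2*n+1) = a^(2*n+1) * ((μ^2)^n * μ) := by
      rw [mul_pow, pow_succ μ, pow_mul μ]
    rw [hμpow]
    field_simp
    ring
  rw [hstep1]
  have : ∑' n : ℕ, ∑ kl ∈ antidiagonal n, C kl
      = ∑' n : ℕ, (2/μ) * ((a*μ)^(2*n+1) / ((2*n+1)!)) := tsum_congr hdiag
  rw [this, tsum_mul_left, (Real.hasSum_sinh (a*μ)).tsum_eq, Real.sinh_eq]
  field_simp

theorem fourier_besselI0
    (lam c t α : ℝ) (hc : 0 < c) (ht : 0 < t)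
    (hα : c * |α| < lam) (hα0 : 0 ≤ c * |α|) :
    ∫ η in (-(c * t))..(c * t),
        Complex.exp (Complex.I * α * η) *
          (besselI0 (lam / c * Real.sqrt (c ^ 2 * t ^ 2 - η ^ 2)) : ℂ)
      = (c / Real.sqrt (lam ^ 2 - α ^ 2 * c ^ 2) : ℝ) *
          ((Real.exp (t * Real.sqrt (lam ^ 2 - α ^ 2 * c ^ 2)) : ℝ)
            - (Real.exp (-(t * Real.sqrt (lam ^ 2 - α ^ 2 * c ^ 2))) : ℝ)) := by
  have hc' : c ≠ 0 := hc.ne'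
  set a := c * t with ha_def
  have ha : 0 < a := mul_pos hc ht
  set b := lam / c with hb_def
  have hαb : |α| < b := by
    rw [hb_def, lt_div_iff₀ hc]
    linarith [hα, mul_comm c |α|]
  have hbpos : 0 < b := lt_of_le_of_lt (abs_nonneg α) hαb
  have hd : 0 < b^2 - α^2 := by
    have h2 : α^2 < b^2 := by
      rw [← _root_.sq_abs α]
      exact pow_lt_pow_left₀ hαb (abs_nonneg α) two_ne_zero
    linarith
  set μ := Real.sqrt (b^2 - α^2) with hμ_def
  have hμpos : 0 < μ := Real.sqrt_pos.mpr hd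
  have hlc : lam^2 - α^2*c^2 = c^2*(b^2-α^2) := by
    rw [hb_def]; field_simp
  have hsq : Real.sqrt (lam^2 - α^2*c^2) = c * μ := by
    rw [hlc, hμ_def, ← Real.sqrt_sq hc.le, ← Real.sqrt_mul (sq_nonneg c), Real.sqrt_sq hc.le]
  -- the term functions
  set F : ℕ × ℕ → ℝ → ℂ := fun p η =>
    ((Complex.I * α)^p.1 / ((p.1)! : ℂ)) * ((((b^2/4)^p.2 / ((p.2)! : ℝ)^2 : ℝ)) : ℂ)
      * ((η^p.1 * (a^2-η^2)^p.2 : ℝ) : ℂ) with hF_def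
  -- pointwise expansion
  have hpoint : ∀ η ∈ Set.Ioc (-a) a,
      Complex.exp (Complex.I * α * η) * ((besselI0 (b * Real.sqrt (a^2-η^2)) : ℝ) : ℂ)
        = ∑' p : ℕ × ℕ, F p η := by
    intro η hη
    have hs : 0 ≤ a^2 - η^2 := by nlinarith [hη.1, hη.2]
    have hf : Summable fun j : ℕ => ‖(Complex.I * ↑α * ↑η)^j / ((j)! : ℂ)‖ := by
      simp only [norm_div, norm_pow, Complex.norm_natCast]
      exact Real.summable_pow_div_factorial _
    have hg : Summable fun k : ℕ =>
        ‖((((b^2*(a^2-η^2)/4)^k / ((k)! : ℝ)^2 : ℝ)) : ℂ)‖ := by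
      have he : ∀ k : ℕ, ‖((((b^2*(a^2-η^2)/4)^k / ((k)! : ℝ)^2 : ℝ)) : ℂ)‖
          = |b^2*(a^2-η^2)/4|^k / ((k)! : ℝ)^2 := by
        intro k
        rw [Complex.norm_real, Real.norm_eq_abs, _root_.abs_div, _root_.abs_pow,
          _root_.abs_of_nonneg (by positivity : (0:ℝ) ≤ ((k)! : ℝ)^2)]
      exact (summable_congr he).mpr (aux_sum2 _)
    have hexp : Complex.exp (Complex.I * α * η) = ∑' j : ℕ, (Complex.I * α * η)^j / ((j)! : ℂ) := by
      rw [Complex.exp_eq_exp_ℂ, NormedSpace.exp_eq_tsum_div]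
    have hbes : ((besselI0 (b * Real.sqrt (a^2-η^2)) : ℝ) : ℂ)
        = ∑' k : ℕ, ((((b^2*(a^2-η^2)/4)^k / ((k)! : ℝ)^2 : ℝ)) : ℂ) := by
      rw [besselI0_sqrt b _ hs, Complex.ofReal_tsum]
    rw [hexp, hbes, tsum_mul_tsum_of_summable_norm hf hg]
    refine tsum_congr fun p => ?_
    rw [hF_def]
    have hx : (b^2*(a^2-η^2)/4)^p.2 = (b^2/4)^p.2 * (a^2-η^2)^p.2 := by
      rw [← mul_pow]
      congr 1
      ring
    rw [hx]
    push_cast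
    ring
  -- norm bound
  set D : ℕ × ℕ → ℝ := fun p =>
    ((|α| * a)^p.1/((p.1)!) * (2*a)) * ((b^2*a^2/4)^p.2/((p.2)! : ℝ)^2) with hD_def
  have hDsum : Summable D := by
    refine Summable.mul_of_nonneg
      (f := fun j : ℕ => (|α| * a)^j/((j)!) * (2*a))
      (g := fun k : ℕ => (b^2*a^2/4)^k/((k)! : ℝ)^2)
      ((Real.summable_pow_div_factorial (|α| * a)).mul_right (2*a))
      ?_ (fun j => by positivity) (fun k => by positivity)
    have := aux_sum2 (b^2*a^2/4)
    simpa [_root_.abs_of_nonneg (by positivity : (0:ℝ) ≤ b^2*a^2/4)] using this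
  have hFnorm : ∀ (p : ℕ × ℕ) (η : ℝ), ‖F p η‖
      = (|α|^p.1/((p.1)!)) * ((b^2/4)^p.2/((p.2)! : ℝ)^2) * (|η|^p.1 * |a^2-η^2|^p.2) := by
    intro p η
    rw [hF_def]
    simp only [norm_mul, norm_div, norm_pow, Complex.norm_natCast, Complex.norm_I,
      Complex.norm_real, Real.norm_eq_abs, one_mul, _root_.abs_div, _root_.abs_pow, _root_.abs_mul]
    rw [_root_.sq_abs b, _root_.sq_abs (((p.2))! : ℝ), _root_.abs_of_nonneg (by norm_num : (0:ℝ) ≤ (4:ℝ))]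
  have hFle : ∀ (p : ℕ × ℕ), ∀ η ∈ Set.Ioc (-a) a,
      ‖F p η‖ ≤ (|α|^p.1/((p.1)!)) * ((b^2/4)^p.2/((p.2)! : ℝ)^2) * (a^p.1 * (a^2)^p.2) := by
    intro p η hη
    rw [hFnorm]
    have h1 : |η| ≤ a := abs_le.mpr ⟨hη.1.le, hη.2⟩
    have h2 : |a^2-η^2| ≤ a^2 := by
      rw [_root_.abs_of_nonneg (by nlinarith [hη.1, hη.2] : (0:ℝ) ≤ a^2-η^2)]
      nlinarith [sq_nonneg η]
    exact mul_le_mul_of_nonneg_left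
      (mul_le_mul (pow_le_pow_left₀ (abs_nonneg η) h1 _)
        (pow_le_pow_left₀ (abs_nonneg _) h2 _) (by positivity) (by positivity))
      (by positivity)
  have hInt : ∀ p : ℕ × ℕ, IntegrableOn (F p) (Set.Ioc (-a) a) := by
    intro p
    apply Continuous.integrableOn_Ioc
    rw [hF_def]
    fun_prop
  have hNormInt : ∀ p : ℕ × ℕ, (∫ η in Set.Ioc (-a) a, ‖F p η‖) ≤ D p := by
    intro p
    have hle := hFle p
    have h2a : (volume (Set.Ioc (-a) a)).toReal = 2*a := by
      rw [Real.volume_Ioc, ENNReal.toReal_ofReal (by linarith)]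
      ring
    calc (∫ η in Set.Ioc (-a) a, ‖F p η‖)
        ≤ ∫ _ in Set.Ioc (-a) a,
            ((|α|^p.1/((p.1)!)) * ((b^2/4)^p.2/((p.2)! : ℝ)^2) * (a^p.1 * (a^2)^p.2)) := by
          refine setIntegral_mono_on ((hInt p).norm) ((integrableOn_const_iff (hC := by finiteness)).mpr ?_)
            measurableSet_Ioc hle
          right
          rw [Real.volume_Ioc]
          exact ENNReal.ofReal_lt_top
      _ = D p := by
          rw [setIntegral_const, smul_eq_mul, measureReal_def, h2a, hD_def]
          ring
  have hNorm : Summable fun p : ℕ × ℕ => ∫ η in Set.Ioc (-a) a, ‖F p η‖ :=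
    Summable.of_nonneg_of_le
      (fun p => integral_nonneg (fun η => norm_nonneg _)) hNormInt hDsum
  -- rewrite goal integrand
  have harg : c^2*t^2 = a^2 := by rw [ha_def]; ring
  simp only [harg]
  rw [intervalIntegral.integral_of_le (by linarith : -a ≤ a),
    MeasureTheory.setIntegral_congr_fun measurableSet_Ioc hpoint,
    ← MeasureTheory.integral_tsum_of_summable_integral_norm hInt hNorm]
  -- evaluate each term
  set G : ℕ × ℕ → ℂ := fun x =>
    ((Complex.I*α)^x.1/((x.1)! : ℂ)) * ((((b^2/4)^x.2/((x.2)! : ℝ)^2 : ℝ)) : ℂ)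
      * (((∫ η in (-a)..a, η^x.1 * (a^2-η^2)^x.2) : ℝ) : ℂ) with hG_def
  have hterm : ∀ p : ℕ × ℕ, (∫ η in Set.Ioc (-a) a, F p η) = G p := by
    intro p
    simp only [hG_def]
    rw [← intervalIntegral.integral_of_le (by linarith : -a ≤ a)]
    simp only [hF_def]
    rw [intervalIntegral.integral_const_mul, intervalIntegral.integral_ofReal]
  rw [tsum_congr hterm]
  -- reindex: odd terms vanish
  have hinj : Function.Injective (fun q : ℕ × ℕ => ((2*q.1, q.2) : ℕ × ℕ)) := by
    intro x y h
    simp only [Prod.mk.injEq, Prod.ext_iff] at h ⊢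
    omega
  have hvanish : ∀ x : ℕ × ℕ, x ∉ Set.range (fun q : ℕ × ℕ => ((2*q.1, q.2) : ℕ × ℕ)) →
      G x = 0 := by
    intro x hx
    simp only [hG_def]
    have hodd : Odd x.1 := by
      rcases Nat.even_or_odd x.1 with he | ho
      · exfalso
        obtain ⟨r, hr⟩ := he
        exact hx ⟨(r, x.2), by simp [Prod.ext_iff]; omega⟩
      · exact ho
    rw [Kodd a x.1 x.2 hodd]
    simp
  have hsupp : Function.support G ⊆ Set.range (fun q : ℕ × ℕ => ((2*q.1, q.2) : ℕ × ℕ)) := by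
    intro x hx
    by_contra h
    exact hx (hvanish x h)
  rw [← Function.Injective.tsum_eq hinj hsupp]
  -- simplify the even terms
  have hGq : ∀ q : ℕ × ℕ,
      G (2*q.1, q.2)
        = ((((-(α^2))^q.1 / ((q.1)!)) * ((b^2)^q.2 / ((q.2)!)) *
            (4 * (((q.1+q.2+1))!) * a^(2*(q.1+q.2)+1) / (((2*(q.1+q.2)+2))!)) : ℝ) : ℂ) := by
    intro q
    simp only [hG_def]
    rw [Keven a q.1 q.2]
    have hI : (Complex.I*(α:ℂ))^(2*q.1) = (((-(α^2))^q.1 : ℝ) : ℂ) := by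
      rw [pow_mul]
      have h2 : (Complex.I*(α:ℂ))^2 = ((-(α^2) : ℝ) : ℂ) := by
        rw [mul_pow, Complex.I_sq]
        push_cast
        ring
      rw [h2, ← Complex.ofReal_pow]
    rw [hI, ← Complex.ofReal_natCast, ← Complex.ofReal_div, ← Complex.ofReal_mul,
      ← Complex.ofReal_mul]
    congr 1
    have h1 : (((2*q.1))! : ℝ) ≠ 0 := by positivity
    have h2 : (((q.1))! : ℝ) ≠ 0 := by positivity
    have h3 : (((q.2))! : ℝ) ≠ 0 := by positivity
    have h4 : (((2*(q.1+q.2)+2))! : ℝ) ≠ 0 := by positivity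
    field_simp
    rw [div_pow, pow_succ]
    field_simp
    ring
  rw [tsum_congr hGq, ← Complex.ofReal_tsum, series_eval a b α ha hαb]
  -- final matching
  rw [hsq]
  have hta : t * (c * μ) = a * μ := by rw [ha_def]; ring
  rw [hta]
  rw [show c / (c*μ) = 1/μ by field_simp]
  push_cast
  field_simp
  rw [← hμ_def]
end

section
/- Let K, t > 0. Then ∫_0^t I₀(K·√(s(t-s))) ds = (1/K)·(e^{Kt/2} - e^{-Kt/2}). -/
open MeasureTheory Finset
open scoped Nat

lemma asc_prod (n : ℕ) : ∀ k : ℕ, (n+1).ascFactorial k = ∏ j ∈ Finset.range k, (n+1+j)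
  | 0 => by simp
  | (k+1) => by
    rw [Nat.ascFactorial_succ, Finset.prod_range_succ, asc_prod n k]; ring

lemma fact_prod (k : ℕ) : k ! * ∏ j ∈ Finset.range (k+1), (k+1+j) = (2*k+1)! := by
  rw [← asc_prod, Nat.factorial_mul_ascFactorial]
  congr 1; ring

lemma beta01 (k : ℕ) : ∫ x in (0:ℝ)..1, x^k * (1-x)^k = (k ! * k ! : ℝ) / (2*k+1)! := by
  have h := Complex.betaIntegral_eval_nat_add_one_right (u := (k:ℂ)+1) (by simp; positivity) k
  rw [Complex.betaIntegral] at h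
  have e1 : ∀ x : ℝ, (x:ℂ) ^ ((k:ℂ)+1-1) * ((1:ℂ)-x) ^ ((k:ℂ)+1-1)
      = ((x^k * (1-x)^k : ℝ) : ℂ) := by
    intro x
    rw [add_sub_cancel_right, Complex.cpow_natCast, Complex.cpow_natCast]
    push_cast; ring
  simp_rw [e1] at h
  rw [intervalIntegral.integral_ofReal] at h
  have e2 : (∏ j ∈ Finset.range (k+1), ((k:ℂ)+1+j)) = ((∏ j ∈ Finset.range (k+1), (k+1+j) : ℕ) : ℂ) := by
    push_cast; ring_nf
  rw [e2] at h
  have hP : 0 < ∏ j ∈ Finset.range (k+1), (k+1+j) := Finset.prod_pos (fun j _ => by omega)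
  have key : (∫ x in (0:ℝ)..1, x^k * (1-x)^k) = (k ! : ℝ) / ((∏ j ∈ Finset.range (k+1), (k+1+j) : ℕ) : ℝ) := by
    apply Complex.ofReal_inj.mp
    rw [h]; push_cast; ring
  rw [key]
  have hfp : ((k)! : ℝ) * ((∏ j ∈ Finset.range (k+1), (k+1+j) : ℕ) : ℝ) = ((2*k+1)! : ℝ) := by
    exact_mod_cast congrArg (Nat.cast : ℕ → ℝ) (fact_prod k)
  have h1 : ((∏ j ∈ Finset.range (k+1), (k+1+j) : ℕ) : ℝ) ≠ 0 := Nat.cast_ne_zero.mpr hP.ne'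
  have h2 : ((2*k+1)! : ℝ) ≠ 0 := Nat.cast_ne_zero.mpr (Nat.factorial_ne_zero _)
  rw [div_eq_div_iff h1 h2, ← hfp]; ring

lemma betat (k : ℕ) (t : ℝ) (ht : 0 < t) :
    ∫ s in (0:ℝ)..t, (s*(t-s))^k = t^(2*k+1) * ((k ! * k ! : ℝ) / (2*k+1)!) := by
  have h := intervalIntegral.mul_integral_comp_mul_left (a := (0:ℝ)) (b := 1)
    (c := t) (f := fun s => (s*(t-s))^k)
  simp only [mul_zero, mul_one] at h
  rw [← h]
  have e : ∀ x : ℝ, (t*x*(t-t*x))^k = t^(2*k) * (x^k*(1-x)^k) := by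
    intro x
    rw [show t*x*(t-t*x) = (t^2)*(x*(1-x)) by ring, mul_pow, ← pow_mul, mul_pow]
  simp_rw [e]
  rw [intervalIntegral.integral_const_mul, beta01]
  ring

lemma bessel_eq_tsum (K x : ℝ) (hx : 0 ≤ x) :
    besselI0 (K * Real.sqrt x) = ∑' k : ℕ, (K^2/4)^k * x^k / ((k ! : ℝ))^2 := by
  unfold besselI0
  congr 1; ext k
  have h2 : (K * Real.sqrt x / 2)^2 = K^2/4 * x := by
    rw [div_pow, mul_pow, Real.sq_sqrt hx]; ring
  rw [pow_mul, h2, mul_pow]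

lemma summable_odd_pow (x : ℝ) : Summable (fun k : ℕ => x ^ (2*k+1) / (2*k+1)!) := by
  have h := (Real.summable_pow_div_factorial x).comp_injective
    (i := fun k : ℕ => 2*k+1) (fun a b hab => by dsimp at hab; omega)
  exact h

lemma tsum_odd_pow (x : ℝ) :
    ∑' k : ℕ, x ^ (2*k+1) / (2*k+1)! = (Real.exp x - Real.exp (-x)) / 2 := by
  rw [← Real.sinh_eq_tsum, Real.sinh_eq]

theorem integral_besselI0_s_t_minus_s
    (K t : ℝ) (hK : 0 < K) (ht : 0 < t) :
    ∫ s in (0:ℝ)..t, besselI0 (K * Real.sqrt (s * (t - s)))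
      = (1 / K) * (Real.exp (K * t / 2) - Real.exp (-(K * t / 2))) := by
  set F : ℕ → ℝ → ℝ := fun k s => (K^2/4)^k * (s*(t-s))^k / ((k ! : ℝ))^2 with hF
  -- value of the k-th integral
  have hval : ∀ k : ℕ, (∫ s in Set.Ioc (0:ℝ) t, F k s) = (2/K) * ((K*t/2)^(2*k+1) / (2*k+1)!) := by
    intro k
    rw [← intervalIntegral.integral_of_le ht.le]
    simp only [hF]
    rw [intervalIntegral.integral_div, intervalIntegral.integral_const_mul, betat k t ht]
    have hk : ((k ! : ℝ))^2 ≠ 0 := by positivity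
    have h2 : ((2*k+1)! : ℝ) ≠ 0 := Nat.cast_ne_zero.mpr (Nat.factorial_ne_zero _)
    have hpow : (K*t/2)^(2*k+1) = (K/2) * ((K^2/4)^k * t^(2*k+1)) := by
      rw [pow_succ, pow_mul, show (K*t/2)^2 = (K^2/4) * t^2 by ring, mul_pow,
        show (t^2)^k = t^(2*k) from (pow_mul t 2 k).symm]
      ring
    rw [hpow]
    field_simp
  -- continuity/integrability
  have hcont : ∀ k : ℕ, Continuous (F k) := by
    intro k; simp only [hF]; fun_prop
  have hint : ∀ k : ℕ, IntegrableOn (F k) (Set.Ioc (0:ℝ) t) := fun k =>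
    (hcont k).integrableOn_Ioc
  have hnonneg : ∀ k : ℕ, ∀ s ∈ Set.Ioc (0:ℝ) t, 0 ≤ F k s := by
    intro k s hs
    have h1 : 0 ≤ s := hs.1.le
    have h2 : 0 ≤ t - s := by linarith [hs.2]
    simp only [hF]
    positivity
  have hsum : Summable (fun k : ℕ => (2/K) * ((K*t/2)^(2*k+1) / (2*k+1)!)) :=
    (summable_odd_pow (K*t/2)).mul_left _
  have hnorm : ∀ k : ℕ, (∫ s in Set.Ioc (0:ℝ) t, ‖F k s‖) = (2/K) * ((K*t/2)^(2*k+1) / (2*k+1)!) := by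
    intro k
    rw [← hval k]
    refine setIntegral_congr_fun measurableSet_Ioc (fun s hs => ?_)
    exact Real.norm_of_nonneg (hnonneg k s hs)
  -- rewrite the integrand as a tsum
  have hcongr : ∫ s in (0:ℝ)..t, besselI0 (K * Real.sqrt (s * (t - s)))
      = ∫ s in (0:ℝ)..t, ∑' k : ℕ, F k s := by
    refine intervalIntegral.integral_congr (fun s hs => ?_)
    rw [Set.uIcc_of_le ht.le] at hs
    have hx : 0 ≤ s * (t - s) := mul_nonneg hs.1 (by linarith [hs.2])
    rw [bessel_eq_tsum K _ hx]
  rw [hcongr, intervalIntegral.integral_of_le ht.le]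
  rw [← MeasureTheory.integral_tsum_of_summable_integral_norm hint (by
    simpa only [hnorm] using hsum)]
  have : ∀ k : ℕ, (∫ s in Set.Ioc (0:ℝ) t, F k s) = (2/K) * ((K*t/2)^(2*k+1) / (2*k+1)!) := hval
  simp_rw [this]
  rw [tsum_mul_left, tsum_odd_pow]
  field_simp
end

section
/- Let λ, p, q > 0 with p + q ≤ 1, and define h(s,t) = e^{-λ(p+q)t}·[λ(p+q)·I₀(2λ(p+q)√(s(t-s))) + (∂/∂t)I₀(2λ(p+q)√(s(t-s)))] for 0 < s < t. Then ∫_0^t h(s,t) ds = 1 - e^{-λ(p+q)t}. -/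
open MeasureTheory intervalIntegral Filter

noncomputable def gFun (y : ℝ) : ℝ := ∑' k : ℕ, y ^ k / ((Nat.factorial k : ℝ)) ^ 2

noncomputable def gDer (y : ℝ) : ℝ :=
  ∑' k : ℕ, (k : ℝ) * y ^ (k - 1) / ((Nat.factorial k : ℝ)) ^ 2

lemma gterm_norm_le (y : ℝ) (k : ℕ) :
    ‖y ^ k / ((Nat.factorial k : ℝ)) ^ 2‖ ≤ |y| ^ k / (Nat.factorial k : ℝ) := by
  have h1 : (1 : ℝ) ≤ (Nat.factorial k : ℝ) := by exact_mod_cast k.factorial_pos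
  rw [Real.norm_eq_abs, abs_div, abs_pow, abs_of_nonneg (by positivity : (0:ℝ) ≤ ((Nat.factorial k : ℝ))^2)]
  apply div_le_div₀ (by positivity) le_rfl (by positivity)
  nlinarith

lemma summable_gFun (y : ℝ) :
    Summable (fun k : ℕ => y ^ k / ((Nat.factorial k : ℝ)) ^ 2) :=
  Summable.of_norm_bounded (Real.summable_pow_div_factorial |y|) (gterm_norm_le y)

lemma besselI0_eq_gFun (z : ℝ) : besselI0 z = gFun ((z / 2) ^ 2) := by
  unfold besselI0 gFun
  congr 1
  funext k
  rw [pow_mul]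

lemma gder_term_norm_le {R : ℝ} (hR : 1 ≤ R) (k : ℕ) {x : ℝ} (hx : |x| ≤ R) :
    ‖(k : ℝ) * x ^ (k - 1) / ((Nat.factorial k : ℝ)) ^ 2‖ ≤ (2 * R) ^ k / (Nat.factorial k : ℝ) := by
  have h1 : (1 : ℝ) ≤ (Nat.factorial k : ℝ) := by exact_mod_cast k.factorial_pos
  have hR0 : (0:ℝ) ≤ R := le_trans zero_le_one hR
  rw [Real.norm_eq_abs, abs_div, abs_mul, abs_pow,
    abs_of_nonneg (by positivity : (0:ℝ) ≤ ((Nat.factorial k : ℝ))^2),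
    abs_of_nonneg (by positivity : (0:ℝ) ≤ (k:ℝ))]
  apply div_le_div₀ (by positivity) ?_ (by positivity) (by nlinarith)
  have hk2 : (k : ℝ) ≤ 2 ^ k := by exact_mod_cast (Nat.lt_two_pow_self (n := k)).le
  have hxk : |x| ^ (k - 1) ≤ R ^ k := by
    calc |x| ^ (k-1) ≤ R ^ (k-1) := pow_le_pow_left₀ (abs_nonneg x) hx _
      _ ≤ R ^ k := pow_le_pow_right₀ hR (Nat.sub_le k 1)
  calc (k:ℝ) * |x| ^ (k-1) ≤ 2 ^ k * R ^ k :=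
        mul_le_mul hk2 hxk (by positivity) (by positivity)
    _ = (2 * R) ^ k := (mul_pow 2 R k).symm

lemma summable_gDer (y : ℝ) :
    Summable (fun k : ℕ => (k : ℝ) * y ^ (k - 1) / ((Nat.factorial k : ℝ)) ^ 2) := by
  have hR : (1:ℝ) ≤ |y| + 1 := by linarith [abs_nonneg y]
  exact Summable.of_norm_bounded (Real.summable_pow_div_factorial (2 * (|y| + 1)))
    (fun k => gder_term_norm_le hR k (by linarith [abs_nonneg y] : |y| ≤ |y| + 1))

lemma hasDerivAt_gFun (y : ℝ) : HasDerivAt gFun (gDer y) y := by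
  have hR : (1:ℝ) ≤ |y| + 1 := by linarith [abs_nonneg y]
  have h := hasDerivAt_tsum_of_isPreconnected
    (u := fun k : ℕ => (2 * (|y| + 1)) ^ k / (Nat.factorial k : ℝ))
    (g := fun (k : ℕ) (z : ℝ) => z ^ k / ((Nat.factorial k : ℝ)) ^ 2)
    (g' := fun (k : ℕ) (z : ℝ) => (k : ℝ) * z ^ (k - 1) / ((Nat.factorial k : ℝ)) ^ 2)
    (Real.summable_pow_div_factorial (2 * (|y| + 1)))
    (Metric.isOpen_ball (x := (0:ℝ)) (ε := |y| + 1))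
    ((convex_ball (0:ℝ) (|y| + 1)).isPreconnected)
    (fun k z _ => (hasDerivAt_pow k z).div_const _)
    (fun k z hz => by
      have : |z| ≤ |y| + 1 := by
        have := mem_ball_iff_norm.mp hz
        simp only [sub_zero, Real.norm_eq_abs] at this
        linarith
      exact gder_term_norm_le hR k this)
    (y₀ := 0) (by simp [Metric.mem_ball]; positivity)
    (summable_gFun 0)
    (by simp [Metric.mem_ball, Real.dist_eq]; linarith [abs_nonneg y])
  exact h

lemma beta_integral (t : ℝ) : ∀ (n m : ℕ),
    ∫ s in (0:ℝ)..t, s ^ m * (t - s) ^ n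
      = (Nat.factorial m : ℝ) * (Nat.factorial n) / (Nat.factorial (m + n + 1)) * t ^ (m + n + 1) := by
  intro n
  induction n with
  | zero =>
    intro m
    have hm : ((Nat.factorial m : ℝ)) ≠ 0 := by positivity
    simp only [pow_zero, mul_one, integral_pow, Nat.add_zero, Nat.factorial_succ, Nat.cast_one]
    rw [zero_pow (Nat.succ_ne_zero m)]
    push_cast
    field_simp
    ring
  | succ n ih =>
    intro m
    have hF : ∀ s : ℝ, HasDerivAt (fun s : ℝ => s ^ (m+1) * (t - s) ^ (n+1))
        ((m+1:ℝ) * (s ^ m * (t - s) ^ (n+1)) - (n+1:ℝ) * (s ^ (m+1) * (t - s) ^ n)) s := by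
      intro s
      have h1 : HasDerivAt (fun s : ℝ => s ^ (m+1)) ((m+1:ℝ) * s ^ m) s := by
        simpa using hasDerivAt_pow (m+1) s
      have h2 : HasDerivAt (fun s : ℝ => (t - s) ^ (n+1)) ((n+1:ℝ) * (t - s) ^ n * (-1)) s := by
        have := ((hasDerivAt_id s).const_sub t).pow (n+1)
        simpa [Pi.pow_def] using this
      have := h1.fun_mul h2
      refine this.congr_deriv ?_
      push_cast
      ring
    have hInt1 : IntervalIntegrable (fun s : ℝ => s ^ m * (t - s) ^ (n+1)) volume 0 t :=
      (Continuous.intervalIntegrable (by continuity) 0 t)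
    have hInt2 : IntervalIntegrable (fun s : ℝ => s ^ (m+1) * (t - s) ^ n) volume 0 t :=
      (Continuous.intervalIntegrable (by continuity) 0 t)
    have key := intervalIntegral.integral_eq_sub_of_hasDerivAt (fun s _ => hF s)
      (Continuous.intervalIntegrable (by continuity) 0 t)
    rw [intervalIntegral.integral_sub ((hInt1).const_mul _) ((hInt2).const_mul _),
      intervalIntegral.integral_const_mul, intervalIntegral.integral_const_mul] at key
    rw [ih (m+1)] at key
    have h0 : t ^ (m+1) * (t - t) ^ (n+1) - (0:ℝ) ^ (m+1) * (t - 0) ^ (n+1) = 0 := by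
      rw [sub_self, zero_pow (Nat.succ_ne_zero n), zero_pow (Nat.succ_ne_zero m)]
      ring
    rw [h0] at key
    have hm1 : (m+1:ℝ) ≠ 0 := by positivity
    have hfact : ((Nat.factorial (m + 1 + n + 1) : ℝ)) ≠ 0 := by positivity
    have heq : m + (n+1) + 1 = m + 1 + n + 1 := by omega
    rw [heq]
    have : (∫ s in (0:ℝ)..t, s ^ m * (t - s) ^ (n+1))
        = (n+1:ℝ) * ((Nat.factorial (m+1) : ℝ) * (Nat.factorial n) / (Nat.factorial (m + 1 + n + 1)) * t ^ (m + 1 + n + 1)) / (m+1:ℝ) := by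
      field_simp at key ⊢
      linarith [key]
    rw [this]
    rw [Nat.factorial_succ m, Nat.factorial_succ n]
    push_cast
    field_simp


noncomputable def wSeq (x : ℝ) : ℕ → ℝ
  | 0 => 0
  | (k+1) => x ^ (2*k+2) / (Nat.factorial (2*k+2) : ℝ)

noncomputable def vSeq (x : ℝ) (k : ℕ) : ℝ :=
  x ^ (2*k+1) / (Nat.factorial (2*k+1) : ℝ) + wSeq x k

lemma summable_even (x : ℝ) : Summable (fun k : ℕ => x ^ (2*k) / (Nat.factorial (2*k) : ℝ)) :=
  (Real.summable_pow_div_factorial x).comp_injective (fun a b hab => by omega)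

lemma summable_odd (x : ℝ) : Summable (fun k : ℕ => x ^ (2*k+1) / (Nat.factorial (2*k+1) : ℝ)) :=
  (Real.summable_pow_div_factorial x).comp_injective (fun a b hab => by omega)

lemma summable_wSeq (x : ℝ) : Summable (wSeq x) := by
  rw [← summable_nat_add_iff 1]
  have := (Real.summable_pow_div_factorial x).comp_injective
    (i := fun k : ℕ => 2*k+2) (fun a b hab => by dsimp only at hab; omega)
  exact this

lemma summable_vSeq (x : ℝ) : Summable (vSeq x) :=
  (summable_odd x).add (summable_wSeq x)

lemma tsum_vSeq (x : ℝ) : ∑' k, vSeq x k = Real.exp x - 1 := by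
  have hexp : Real.exp x = ∑' n : ℕ, x ^ n / (Nat.factorial n : ℝ) := by
    rw [Real.exp_eq_exp_ℝ, NormedSpace.exp_eq_tsum_div]
  have hsplit := tsum_even_add_odd (f := fun n : ℕ => x ^ n / (Nat.factorial n : ℝ)) (summable_even x) (summable_odd x)
  have heven : ∑' k : ℕ, x ^ (2*k) / (Nat.factorial (2*k) : ℝ)
      = 1 + ∑' k : ℕ, wSeq x (k+1) := by
    rw [Summable.tsum_eq_zero_add (summable_even x)]
    have h0 : x ^ (2*0) / (Nat.factorial (2*0) : ℝ) = 1 := by norm_num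
    rw [h0]
    congr 1
  have hw : ∑' k, wSeq x k = (∑' k : ℕ, x ^ (2*k) / (Nat.factorial (2*k) : ℝ)) - 1 := by
    rw [Summable.tsum_eq_zero_add (summable_wSeq x), heven]
    show (0:ℝ) + _ = _
    ring
  unfold vSeq
  rw [Summable.tsum_add (summable_odd x) (summable_wSeq x), hw, hexp]
  rw [← hsplit]
  ring

theorem vertical_time_density_integral
    (lam p q t : ℝ) (hlam : 0 < lam) (hp : 0 < p) (hq : 0 < q) (hpq : p + q ≤ 1)
    (ht : 0 < t)
    (h : ℝ → ℝ → ℝ)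
    (hh : ∀ s τ, h s τ =
      Real.exp (-lam * (p + q) * τ) *
        (lam * (p + q) * besselI0 (2 * lam * (p + q) * Real.sqrt (s * (τ - s)))
          + deriv (fun σ => besselI0 (2 * lam * (p + q) * Real.sqrt (s * (σ - s)))) τ)) :
    ∫ s in (0:ℝ)..t, h s t = 1 - Real.exp (-lam * (p + q) * t) := by
  obtain ⟨c, hc⟩ : ∃ c : ℝ, c = lam * (p + q) := ⟨_, rfl⟩
  have hc0 : 0 < c := hc ▸ mul_pos hlam (by linarith)
  have harg : -lam * (p + q) * t = -(c * t) := by rw [hc]; ring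
  obtain ⟨F, hF⟩ : ∃ F : ℕ → ℝ → ℝ, F = fun k s =>
      Real.exp (-(c*t)) * (c * ((c^2 * (s * (t - s)))^k / ((Nat.factorial k : ℝ))^2)
        + ((k:ℝ) * (c^2 * (s * (t - s)))^(k-1) / ((Nat.factorial k : ℝ))^2) * (c^2 * s)) :=
    ⟨_, rfl⟩
  rw [show (lam * (p + q)) = c from hc.symm] at hh
  -- pointwise identity on Ioo
  have hpt : ∀ s ∈ Set.Ioo (0:ℝ) t, h s t = ∑' k, F k s := by
    intro s hs
    obtain ⟨hs0, hst⟩ := hs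
    rw [hh s t]
    have hbess : ∀ σ, s < σ →
        besselI0 (2 * lam * (p + q) * Real.sqrt (s * (σ - s)))
          = gFun (c^2 * (s * (σ - s))) := by
      intro σ hσ
      rw [besselI0_eq_gFun]
      congr 1
      have hu : 0 ≤ s * (σ - s) := mul_nonneg hs0.le (by linarith)
      have h2 : 2 * lam * (p + q) * Real.sqrt (s * (σ - s)) / 2
          = c * Real.sqrt (s * (σ - s)) := by rw [hc]; ring
      rw [h2, mul_pow, Real.sq_sqrt hu]
    have hEq : (fun σ => besselI0 (2 * lam * (p + q) * Real.sqrt (s * (σ - s))))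
        =ᶠ[nhds t] (fun σ => gFun (c^2 * (s * (σ - s)))) := by
      filter_upwards [Ioi_mem_nhds hst] with σ hσ
      exact hbess σ hσ
    have hin : HasDerivAt (fun σ : ℝ => c^2 * (s * (σ - s))) (c^2 * s) t := by
      have := (((hasDerivAt_id t).sub_const s).const_mul s).const_mul (c^2)
      simpa using this
    have hd : HasDerivAt (fun σ => gFun (c^2 * (s * (σ - s))))
        (gDer (c^2 * (s * (t - s))) * (c^2 * s)) t := by
      have := (hasDerivAt_gFun (c^2 * (s * (t - s)))).comp t hin
      simpa [Function.comp_def] using this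
    rw [hEq.deriv_eq, hd.deriv, hbess t hst]
    rw [show -lam * (p + q) * t = -(c*t) from by rw [hc]; ring]
    simp only [hF]
    rw [tsum_mul_left]
    congr 1
    rw [Summable.tsum_add ((summable_gFun _).mul_left c) ((summable_gDer _).mul_right (c^2 * s)),
      tsum_mul_left, tsum_mul_right]
    rfl
  -- nonnegativity
  have hFnn : ∀ (k : ℕ) (s : ℝ), s ∈ Set.Ioc (0:ℝ) t → 0 ≤ F k s := by
    intro k s hs
    have hs0 : (0:ℝ) ≤ s := hs.1.le
    have hts : (0:ℝ) ≤ t - s := by linarith [hs.2]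
    have hX : (0:ℝ) ≤ c^2 * (s * (t - s)) := by
      apply mul_nonneg (sq_nonneg c) (mul_nonneg hs0 hts)
    simp only [hF]
    apply mul_nonneg (Real.exp_pos _).le
    apply add_nonneg
    · exact mul_nonneg hc0.le (div_nonneg (pow_nonneg hX k) (by positivity))
    · exact mul_nonneg (div_nonneg (mul_nonneg (Nat.cast_nonneg k) (pow_nonneg hX _))
        (by positivity)) (mul_nonneg (sq_nonneg c) hs0)
  -- the integral of each term
  have hIk : ∀ k : ℕ, ∫ s in (0:ℝ)..t, F k s = Real.exp (-(c*t)) * vSeq (c*t) k := by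
    intro k
    match k with
    | 0 =>
      have h0 : ∀ s : ℝ, F 0 s = Real.exp (-(c*t)) * c := by
        intro s; simp only [hF]; norm_num
      rw [intervalIntegral.integral_congr (fun s _ => h0 s)]
      rw [intervalIntegral.integral_const]
      show (t - 0) • (Real.exp (-(c*t)) * c) = _
      unfold vSeq wSeq
      norm_num
      ring
    | (j+1) =>
      have hFs : ∀ s : ℝ, F (j+1) s =
          Real.exp (-(c*t)) * (c * (c^2)^(j+1) / ((Nat.factorial (j+1) : ℝ))^2)
            * (s^(j+1) * (t - s)^(j+1))
          + Real.exp (-(c*t)) * (((j:ℝ)+1) * (c^2)^(j+1) / ((Nat.factorial (j+1) : ℝ))^2)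
            * (s^(j+1) * (t - s)^j) := by
        intro s
        simp only [hF, Nat.succ_sub_one]
        have hXp : ∀ m : ℕ, (c^2 * (s * (t - s)))^m = (c^2)^m * (s^m * (t - s)^m) := by
          intro m; rw [mul_pow, mul_pow]
        rw [hXp, hXp]
        push_cast
        ring
      rw [intervalIntegral.integral_congr (fun s _ => hFs s)]
      have hi1 : IntervalIntegrable (fun s : ℝ => s^(j+1) * (t-s)^(j+1)) volume 0 t :=
        Continuous.intervalIntegrable (by fun_prop) 0 t
      have hi2 : IntervalIntegrable (fun s : ℝ => s^(j+1) * (t-s)^j) volume 0 t :=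
        Continuous.intervalIntegrable (by fun_prop) 0 t
      rw [intervalIntegral.integral_add (hi1.const_mul _) (hi2.const_mul _),
        intervalIntegral.integral_const_mul, intervalIntegral.integral_const_mul,
        beta_integral t (j+1) (j+1), beta_integral t j (j+1)]
      have e1 : j + 1 + (j + 1) + 1 = 2*j+3 := by ring
      have e2 : j + 1 + j + 1 = 2*j+2 := by ring
      rw [e1, e2]
      unfold vSeq
      show _ = Real.exp (-(c*t)) * ((c*t)^(2*(j+1)+1) / (Nat.factorial (2*(j+1)+1) : ℝ)
        + (c*t)^(2*j+2) / (Nat.factorial (2*j+2) : ℝ))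
      have e3 : 2*(j+1)+1 = 2*j+3 := by ring
      rw [e3]
      have hfa : ((Nat.factorial (j+1) : ℝ)) = ((j:ℝ)+1) * (Nat.factorial j : ℝ) := by
        rw [Nat.factorial_succ]; push_cast; ring
      rw [hfa]
      have n1 : ((j:ℝ)+1) ≠ 0 := by positivity
      have n2 : ((Nat.factorial j : ℝ)) ≠ 0 := by positivity
      have n3 : ((Nat.factorial (2*j+3) : ℝ)) ≠ 0 := by positivity
      have n4 : ((Nat.factorial (2*j+2) : ℝ)) ≠ 0 := by positivity
      field_simp
      ring
  -- switch to set integrals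
  have hIk' : ∀ k : ℕ, ∫ s in Set.Ioc (0:ℝ) t, F k s = Real.exp (-(c*t)) * vSeq (c*t) k := by
    intro k
    rw [← intervalIntegral.integral_of_le ht.le]
    exact hIk k
  have hInt : ∀ k : ℕ, IntegrableOn (F k) (Set.Ioc (0:ℝ) t) volume := by
    intro k
    apply Continuous.integrableOn_Ioc
    simp only [hF]
    fun_prop
  have hNormEq : ∀ k : ℕ, (∫ s in Set.Ioc (0:ℝ) t, ‖F k s‖) = Real.exp (-(c*t)) * vSeq (c*t) k := by
    intro k
    rw [setIntegral_congr_fun measurableSet_Ioc (fun s hs => Real.norm_of_nonneg (hFnn k s hs))]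
    exact hIk' k
  have hNorm : Summable (fun k : ℕ => ∫ s in Set.Ioc (0:ℝ) t, ‖F k s‖) := by
    simp only [hNormEq]
    exact (summable_vSeq (c*t)).mul_left _
  -- a.e. congruence
  have hae : ∀ᵐ s : ℝ, s ∈ Set.Ioc (0:ℝ) t → h s t = ∑' k, F k s := by
    have hsing : (volume ({t} : Set ℝ)) = 0 := Real.volume_singleton
    filter_upwards [compl_mem_ae_iff.mpr hsing] with s hsne hmem
    exact hpt s ⟨hmem.1, lt_of_le_of_ne hmem.2 hsne⟩
  calc ∫ s in (0:ℝ)..t, h s t = ∫ s in Set.Ioc (0:ℝ) t, h s t :=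
        intervalIntegral.integral_of_le ht.le
    _ = ∫ s in Set.Ioc (0:ℝ) t, (∑' k, F k s) := setIntegral_congr_ae measurableSet_Ioc hae
    _ = ∑' k, ∫ s in Set.Ioc (0:ℝ) t, F k s :=
        (integral_tsum_of_summable_integral_norm hInt hNorm).symm
    _ = ∑' k, Real.exp (-(c*t)) * vSeq (c*t) k := tsum_congr (fun k => hIk' k)
    _ = Real.exp (-(c*t)) * ∑' k, vSeq (c*t) k := tsum_mul_left
    _ = Real.exp (-(c*t)) * (Real.exp (c*t) - 1) := by rw [tsum_vSeq]
    _ = 1 - Real.exp (-lam * (p + q) * t) := by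
        rw [harg, mul_sub, mul_one, ← Real.exp_add, neg_add_cancel, Real.exp_zero]
end

section
/- Let λ > 0, 0 < p < 1, and α real; set D(α) = √(λ²(12p²-4p+1) - α² - 2iαλ(1-2p)) (principal square root). The function F(t) = (3/8)(1 + (λ - iα + 6λp)/(3D))·e^{(t/2)(iα - λ(1+2p) + D)} + (3/8)(1 - (λ - iα + 6λp)/(3D))·e^{(t/2)(iα - λ(1+2p) - D)} satisfies F'' + (λ(1+2p) - iα)F' + (2λ²p(1-p) - 2iαλp)F = 0 with F(0) = 3/4 and F'(0) = (iα - λ)/4. -/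
open Complex

theorem oblique_charfun_ode_p_eq_q
    (lam p α : ℝ) (hlam : 0 < lam) (hp0 : 0 < p) (hp1 : p < 1)
    (D : ℂ)
    (hD : D = (((lam ^ 2 * (12 * p ^ 2 - 4 * p + 1) - α ^ 2 : ℝ) : ℂ)
        - 2 * Complex.I * α * lam * (1 - 2 * p)) ^ ((1 : ℂ) / 2))
    (hD0 : D ≠ 0)
    (F : ℝ → ℂ)
    (hdef : ∀ t : ℝ, F t =
      3 / 8 * (1 + (lam - Complex.I * α + 6 * lam * p) / (3 * D)) *
          Complex.exp (t / 2 * (Complex.I * α - lam * (1 + 2 * p) + D))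
        + 3 / 8 * (1 - (lam - Complex.I * α + 6 * lam * p) / (3 * D)) *
          Complex.exp (t / 2 * (Complex.I * α - lam * (1 + 2 * p) - D))) :
    (∀ t : ℝ, deriv (deriv F) t + (lam * (1 + 2 * p) - Complex.I * α) * deriv F t
        + (2 * lam ^ 2 * p * (1 - p) - 2 * Complex.I * α * lam * p) * F t = 0)
      ∧ F 0 = 3 / 4 ∧ deriv F 0 = (Complex.I * α - lam) / 4 := by
  set z : ℂ := (((lam ^ 2 * (12 * p ^ 2 - 4 * p + 1) - α ^ 2 : ℝ) : ℂ)
      - 2 * Complex.I * α * lam * (1 - 2 * p)) with hz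
  have hzne : z ≠ 0 := by
    intro h
    apply hD0
    rw [hD, h]
    exact Complex.zero_cpow (by norm_num)
  have hD2 : D ^ 2 = z := by
    rw [hD, sq, ← Complex.cpow_add _ _ hzne]
    norm_num
  have hD2' : D ^ 2 = ((lam : ℂ) ^ 2 * (12 * (p:ℂ) ^ 2 - 4 * p + 1) - (α:ℂ) ^ 2)
      - 2 * Complex.I * α * lam * (1 - 2 * p) := by
    rw [hD2, hz]; push_cast; ring
  set A : ℂ := 3 / 8 * (1 + ((lam : ℂ) - Complex.I * α + 6 * lam * p) / (3 * D)) with hA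
  set B : ℂ := 3 / 8 * (1 - ((lam : ℂ) - Complex.I * α + 6 * lam * p) / (3 * D)) with hB
  set c₁ : ℂ := Complex.I * α - lam * (1 + 2 * p) + D with hc₁
  set c₂ : ℂ := Complex.I * α - lam * (1 + 2 * p) - D with hc₂
  have key : ∀ (cc : ℂ) (t : ℝ),
      HasDerivAt (fun s : ℝ => Complex.exp ((s : ℂ) / 2 * cc))
        (cc / 2 * Complex.exp ((t : ℂ) / 2 * cc)) t := by
    intro cc t
    have h1 : HasDerivAt (fun s : ℝ => (s : ℂ)) 1 t := by
      simpa using (hasDerivAt_id t).ofReal_comp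
    have h2 := ((h1.div_const 2).mul_const cc).cexp
    convert h2 using 1
    ring
  have hFfun : F = fun t : ℝ => A * Complex.exp ((t : ℂ) / 2 * c₁)
      + B * Complex.exp ((t : ℂ) / 2 * c₂) := by
    funext t; exact hdef t
  have hF' : ∀ t : ℝ, HasDerivAt F
      (A * (c₁ / 2 * Complex.exp ((t : ℂ) / 2 * c₁))
        + B * (c₂ / 2 * Complex.exp ((t : ℂ) / 2 * c₂))) t := by
    intro t
    rw [hFfun]
    exact ((key c₁ t).const_mul A).add ((key c₂ t).const_mul B)
  have hderiv : deriv F = fun t : ℝ =>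
      A * (c₁ / 2 * Complex.exp ((t : ℂ) / 2 * c₁))
        + B * (c₂ / 2 * Complex.exp ((t : ℂ) / 2 * c₂)) :=
    funext fun t => (hF' t).deriv
  have hF'' : ∀ t : ℝ, HasDerivAt (deriv F)
      (A * (c₁ / 2 * (c₁ / 2 * Complex.exp ((t : ℂ) / 2 * c₁)))
        + B * (c₂ / 2 * (c₂ / 2 * Complex.exp ((t : ℂ) / 2 * c₂)))) t := by
    intro t
    rw [hderiv]
    exact (((key c₁ t).const_mul (c₁ / 2)).const_mul A).add
      (((key c₂ t).const_mul (c₂ / 2)).const_mul B)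
  have q₁ : (c₁ / 2) ^ 2 + ((lam : ℂ) * (1 + 2 * p) - Complex.I * α) * (c₁ / 2)
      + (2 * (lam : ℂ) ^ 2 * p * (1 - p) - 2 * Complex.I * α * lam * p) = 0 := by
    rw [hc₁]; linear_combination hD2' / 4 - (α : ℂ) ^ 2 / 4 * Complex.I_sq
  have q₂ : (c₂ / 2) ^ 2 + ((lam : ℂ) * (1 + 2 * p) - Complex.I * α) * (c₂ / 2)
      + (2 * (lam : ℂ) ^ 2 * p * (1 - p) - 2 * Complex.I * α * lam * p) = 0 := by
    rw [hc₂]; linear_combination hD2' / 4 - (α : ℂ) ^ 2 / 4 * Complex.I_sq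
  refine ⟨fun t => ?_, ?_, ?_⟩
  · rw [(hF'' t).deriv, (hF' t).deriv, hdef t]
    set E₁ : ℂ := Complex.exp ((t : ℂ) / 2 * c₁)
    set E₂ : ℂ := Complex.exp ((t : ℂ) / 2 * c₂)
    linear_combination (A * E₁) * q₁ + (B * E₂) * q₂
  · rw [hdef 0]
    simp only [Complex.ofReal_zero, zero_div, zero_mul, Complex.exp_zero, mul_one]
    field_simp
    ring
  · rw [(hF' 0).deriv]
    simp only [Complex.ofReal_zero, zero_div, zero_mul, Complex.exp_zero, mul_one]
    rw [hA, hB, hc₁, hc₂]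
    field_simp
    ring
end
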